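/- Let λ = (α|β) be a partition of length at most n, and m ≥ 0. Then Π_{u ∈ (α+m|β)} (n + c(u)) = Π_{u ∈ (α|β+m)} (m + n + c(u)), where the products are over cells of the respective Young diagrams and c(u) is the content. -/

import Mathlib

/-!
Cutting a Young diagram of Frobenius rank `r` into its `r` diagonal hooks, the hook with
Frobenius coordinates `(a | b)` carries each content `-b, …, a` exactly once. Hence both sides
factor over the hooks, and the `i`-th factors `∏_{c = -βᵢ}^{αᵢ + m} (n + c)` and
`∏_{c = -βᵢ - m}^{αᵢ} (m + n + c)` agree after the shift `c ↦ c + m`.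
-/

open Finset

lemma Finset.prod_Icc_add' {α M : Type*} [CommMonoid M] [AddCommMonoid α] [PartialOrder α]
    [IsOrderedCancelAddMonoid α] [ExistsAddOfLE α] [LocallyFiniteOrder α]
    (f : α → M) (a b c : α) : ∏ x ∈ Icc a b, f (x + c) = ∏ x ∈ Icc (a + c) (b + c), f x := by
  rw [← map_add_right_Icc, prod_map]
  rfl

namespace YoungDiagram

def content (u : ℕ × ℕ) : ℤ := u.2 - u.1

def diagonalHook (μ : YoungDiagram) (i : ℕ) : Finset (ℕ × ℕ) :=
  {u ∈ μ.cells | min u.1 u.2 = i}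

variable {M : Type*} [CommMonoid M]

lemma prod_cells_eq_prod_diagonalHook (μ : YoungDiagram) {r : ℕ}
    (hr : ∀ i, (i, i) ∈ μ ↔ i < r) (f : ℕ × ℕ → M) :
    ∏ u ∈ μ.cells, f u = ∏ i ∈ range r, ∏ u ∈ μ.diagonalHook i, f u := by
  refine (prod_fiberwise_of_maps_to (fun u hu => ?_) f).symm
  rw [mem_range, ← hr]
  exact μ.up_left_mem (min_le_left _ _) (min_le_right _ _) hu

/-- The cell of content `c` in the `i`-th diagonal hook is `(i + (-c)₊, i + c₊)`. -/
lemma prod_diagonalHook_content (μ : YoungDiagram) {i a b : ℕ}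
    (ha : μ.rowLen i = a + i + 1) (hb : μ.colLen i = b + i + 1) (g : ℤ → M) :
    ∏ u ∈ μ.diagonalHook i, g (content u) = ∏ c ∈ Icc (-(b : ℤ)) a, g c := by
  have hrow : ∀ j, (i, j) ∈ μ ↔ j < a + i + 1 := fun j => ha ▸ μ.mem_iff_lt_rowLen
  have hcol : ∀ j, (j, i) ∈ μ ↔ j < b + i + 1 := fun j => hb ▸ μ.mem_iff_lt_colLen
  refine prod_nbij' content (fun c => (i + (-c).toNat, i + c.toNat)) ?_ ?_ ?_ ?_ (fun _ _ => rfl)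
  · rintro ⟨x, y⟩ hu
    simp only [diagonalHook, mem_filter, mem_cells, mem_Icc, content] at hu ⊢
    obtain ⟨hu, hmin⟩ := hu
    rcases min_choice x y with h | h <;> rw [h] at hmin <;> subst hmin
    · have := (hrow y).1 hu; omega
    · have := (hcol x).1 hu; omega
  · intro c hc
    simp only [diagonalHook, mem_filter, mem_cells, mem_Icc] at hc ⊢
    rcases le_total 0 c with h | h
    · rw [Int.toNat_of_nonpos (by omega), add_zero]
      exact ⟨(hrow _).2 (by omega), by omega⟩
    · rw [Int.toNat_of_nonpos h, add_zero]
      exact ⟨(hcol _).2 (by omega), by omega⟩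
  · rintro ⟨x, y⟩ hu
    simp only [diagonalHook, mem_filter, content, Prod.mk.injEq] at hu ⊢
    omega
  · intro c _
    simp only [content]
    omega

lemma prod_cells_content (μ : YoungDiagram) {r : ℕ} {a b : ℕ → ℕ}
    (hr : ∀ i, (i, i) ∈ μ ↔ i < r) (ha : ∀ i < r, μ.rowLen i = a i + i + 1)
    (hb : ∀ i < r, μ.colLen i = b i + i + 1) (g : ℤ → M) :
    ∏ u ∈ μ.cells, g (content u) = ∏ i ∈ range r, ∏ c ∈ Icc (-(b i : ℤ)) (a i), g c := by
  rw [μ.prod_cells_eq_prod_diagonalHook hr]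
  refine prod_congr rfl fun i hi => ?_
  rw [mem_range] at hi
  exact μ.prod_diagonalHook_content (ha i hi) (hb i hi) g

end YoungDiagram

lemma prod_Icc_natCast_add_shift (n m a b : ℕ) :
    ∏ c ∈ Icc (-(b : ℤ)) ((a + m : ℕ) : ℤ), ((n : ℤ) + c) =
      ∏ c ∈ Icc (-((b + m : ℕ) : ℤ)) a, ((m : ℤ) + n + c) := by
  calc _ = ∏ c ∈ Icc (-((b + m : ℕ) : ℤ) + m) (a + m), ((n : ℤ) + c) := by push_cast; ring_nf
    _ = ∏ c ∈ Icc (-((b + m : ℕ) : ℤ)) a, ((n : ℤ) + (c + m)) := (prod_Icc_add' _ _ _ _).symm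
    _ = _ := prod_congr rfl fun _ _ => by ring

theorem prod_n_add_content_eq_general (n m r : ℕ) (α β : ℕ → ℕ) (μ₁ μ₂ : YoungDiagram)
    (hr₁ : ∀ i : ℕ, (i, i) ∈ μ₁ ↔ i < r)
    (hα₁ : ∀ i < r, μ₁.rowLen i = (α i + m) + i + 1)
    (hβ₁ : ∀ i < r, μ₁.colLen i = β i + i + 1)
    (hr₂ : ∀ i : ℕ, (i, i) ∈ μ₂ ↔ i < r)
    (hα₂ : ∀ i < r, μ₂.rowLen i = α i + i + 1)
    (hβ₂ : ∀ i < r, μ₂.colLen i = (β i + m) + i + 1) :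
    ∏ u ∈ μ₁.cells, ((n : ℤ) + ((u.2 : ℤ) - (u.1 : ℤ))) =
      ∏ u ∈ μ₂.cells, ((m : ℤ) + (n : ℤ) + ((u.2 : ℤ) - (u.1 : ℤ))) := by
  calc _ = ∏ i ∈ range r, ∏ c ∈ Icc (-(β i : ℤ)) ((α i + m : ℕ) : ℤ), ((n : ℤ) + c) :=
        μ₁.prod_cells_content hr₁ hα₁ hβ₁ _
    _ = ∏ i ∈ range r, ∏ c ∈ Icc (-((β i + m : ℕ) : ℤ)) (α i), ((m : ℤ) + n + c) :=
        prod_congr rfl fun i _ => prod_Icc_natCast_add_shift n m (α i) (β i)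
    _ = _ := (μ₂.prod_cells_content hr₂ hα₂ hβ₂ _).symm

/-- Let λ = (α|β) be a partition of length at most n and m ≥ 0, and let
μ₁ = (α+m|β) and μ₂ = (α|β+m) (Frobenius coordinates, 0-indexed as in the hypotheses).
Then Π_{u ∈ (α+m|β)} (n + c(u)) = Π_{u ∈ (α|β+m)} (m + n + c(u)). -/
theorem prod_n_add_content_eq (n m r : ℕ) (α β : ℕ → ℕ) (μ μ₁ μ₂ : YoungDiagram)
    (hlen : μ.colLen 0 ≤ n)
    (hr : ∀ i : ℕ, (i, i) ∈ μ ↔ i < r)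
    (hα : ∀ i < r, μ.rowLen i = α i + i + 1)
    (hβ : ∀ i < r, μ.colLen i = β i + i + 1)
    (hr₁ : ∀ i : ℕ, (i, i) ∈ μ₁ ↔ i < r)
    (hα₁ : ∀ i < r, μ₁.rowLen i = (α i + m) + i + 1)
    (hβ₁ : ∀ i < r, μ₁.colLen i = β i + i + 1)
    (hr₂ : ∀ i : ℕ, (i, i) ∈ μ₂ ↔ i < r)
    (hα₂ : ∀ i < r, μ₂.rowLen i = α i + i + 1)
    (hβ₂ : ∀ i < r, μ₂.colLen i = (β i + m) + i + 1) :
    ∏ u ∈ μ₁.cells, ((n : ℤ) + ((u.2 : ℤ) - (u.1 : ℤ))) =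
      ∏ u ∈ μ₂.cells, ((m : ℤ) + (n : ℤ) + ((u.2 : ℤ) - (u.1 : ℤ))) :=
  prod_n_add_content_eq_general n m r α β μ₁ μ₂ hr₁ hα₁ hβ₁ hr₂ hα₂ hβ₂
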